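/- Under the same setup (terminal ℚ-Gorenstein cone with functional m satisfying ⟨m, v_i⟩ = 1 on primitive ray generators), any lattice point w in the interior of τ with ⟨m, w⟩ ≤ 2 is minimal among nonzero non-ray lattice points of τ with respect to the order u ≤ w iff w − u ∈ τ ∩ N. -/

import Mathlib

/-!
If `u ≤ w` with `u` nonzero and off the rays, terminality forces `⟨m, u⟩ > 1`, so
`⟨m, w - u⟩ = ⟨m, w⟩ - ⟨m, u⟩ < 1`. But a lattice point of the cone with `⟨m, ·⟩ < 1` is `0`
by terminality again (the ray generators have `⟨m, vᵢ⟩ = 1`), hence `u = w`.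
-/

section TerminalCone

variable {N ι : Type*} {C : Set N} {v : ι → N} {m : N → ℚ}

theorem one_lt_of_terminal [AddMonoid N]
    (hterminal : ∀ w ∈ C, m w ≤ 1 → w = 0 ∨ ∃ i, w = v i)
    {u : N} (hu : u ∈ C) (hu0 : u ≠ 0) (huray : ∀ i (c : ℕ), u ≠ c • v i) : 1 < m u := by
  by_contra! hle
  rcases hterminal u hu hle with rfl | ⟨i, rfl⟩
  · exact hu0 rfl
  · exact huray i 1 (one_smul ℕ (v i)).symm

theorem eq_zero_of_terminal_of_lt_one [Zero N] (hm1 : ∀ i, m (v i) = 1)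
    (hterminal : ∀ w ∈ C, m w ≤ 1 → w = 0 ∨ ∃ i, w = v i)
    {x : N} (hx : x ∈ C) (hlt : m x < 1) : x = 0 := by
  rcases hterminal x hx hlt.le with h0 | ⟨i, rfl⟩
  · exact h0
  · exact absurd (hm1 i) hlt.ne

end TerminalCone

theorem terminal_cone_low_discrepancy_minimal_general
    (n k : ℕ) (τ : Set (Fin n → ℝ))
    (v : Fin k → (Fin n → ℤ))
    (m : (Fin n → ℤ) →ₗ[ℤ] ℚ)
    (hm1 : ∀ i, m (v i) = 1)
    (hterminal : ∀ w : Fin n → ℤ, (fun j => (w j : ℝ)) ∈ τ → m w ≤ 1 →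
      w = 0 ∨ ∃ i, w = v i)
    (w : Fin n → ℤ)
    (hw2 : m w ≤ 2) :
    ∀ u : Fin n → ℤ,
      (fun j => (u j : ℝ)) ∈ τ →                         -- u is a lattice point of τ
      u ≠ 0 →                                            -- u is nonzero
      (∀ (i : Fin k) (c : ℕ), u ≠ c • v i) →             -- u is not on a ray ℤ₊ · vᵢ
      (fun j => ((w - u) j : ℝ)) ∈ τ →                   -- w - u ∈ τ ∩ N, i.e. u ≤ w
      u = w := by
  intro u hu hu0 huray hwu
  have hmu : 1 < m u := one_lt_of_terminal hterminal hu hu0 huray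
  have hmwu : m (w - u) < 1 := by rw [map_sub]; linarith
  exact (sub_eq_zero.mp (eq_zero_of_terminal_of_lt_one hm1 hterminal hwu hmwu)).symm

/-- In a terminal ℚ-Gorenstein cone, an interior lattice point `w` with `⟨m, w⟩ ≤ 2`
is minimal in the set `S` of nonzero lattice points of `τ` not lying on the rays,
with respect to the order `u ≤ w` iff `w - u ∈ τ ∩ N`. -/
theorem terminal_cone_low_discrepancy_minimal
    (n k : ℕ) (τ : Set (Fin n → ℝ))
    (hadd : ∀ x y, x ∈ τ → y ∈ τ → x + y ∈ τ)
    (v : Fin k → (Fin n → ℤ))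
    (hv : ∀ i, (fun j => ((v i) j : ℝ)) ∈ τ)
    (m : (Fin n → ℤ) →ₗ[ℤ] ℚ)
    (hm1 : ∀ i, m (v i) = 1)
    (hterminal : ∀ w : Fin n → ℤ, (fun j => (w j : ℝ)) ∈ τ → m w ≤ 1 →
      w = 0 ∨ ∃ i, w = v i)
    (w : Fin n → ℤ)
    (hwint : (fun j => (w j : ℝ)) ∈ interior τ)
    (hwlat : (fun j => (w j : ℝ)) ∈ τ)
    (hw2 : m w ≤ 2) :
    ∀ u : Fin n → ℤ,
      (fun j => (u j : ℝ)) ∈ τ →                         -- u is a lattice point of τ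
      u ≠ 0 →                                            -- u is nonzero
      (∀ (i : Fin k) (c : ℕ), u ≠ c • v i) →             -- u is not on a ray ℤ₊ · vᵢ
      (fun j => ((w - u) j : ℝ)) ∈ τ →                   -- w - u ∈ τ ∩ N, i.e. u ≤ w
      u = w :=
  terminal_cone_low_discrepancy_minimal_general n k τ v m hm1 hterminal w hw2
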